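/- arXiv:1903.05791 — 2 statements merged into one kernel-verified Lean document; each statement's English description precedes it below -/
import Mathlib

section
/- (Proposition 1, binding a witness function.) Let L be a complete lattice, Lang a first-order language, V a type of variables, f : Lang.Term V → L (the derivative evaluation F′(α, ·) of a safe function on encryption patterns), and P ⊆ Lang.Term V a set of patterns (the renamed encryption patterns of the protocol). Let m ∈ P and assume every m' ∈ P is either equal to m or has variable finset disjoint from that of m (the patterns are renamed apart from m). Then for every substitution σ : V → Lang.Term V: (upper bound) sInf { f m' | m' ∈ P ∧ ∃ σ', m'.subst σ' = m.subst σ } ⊑ f m, and (lower bound) sInf { f m' | m' ∈ P ∧ ∃ σ'', m'.subst σ'' = m.subst σ'' } ⊑ sInf { f m' | m' ∈ P ∧ ∃ σ', m'.subst σ' = m.subst σ }. That is, F′(α, m) ⊒ W(α, mσ) ⊒ the lower bound taken over all patterns unifiable with m. -/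
open FirstOrder

lemma subst_congr_on_varFinset {Lang : FirstOrder.Language} {V : Type*} [DecidableEq V]
    (t : Lang.Term V) (σ₁ σ₂ : V → Lang.Term V)
    (h : ∀ v ∈ t.varFinset, σ₁ v = σ₂ v) : t.subst σ₁ = t.subst σ₂ := by
  induction t with
  | var v => exact h v (by simp [FirstOrder.Language.Term.varFinset])
  | func f' ts ih =>
    simp only [FirstOrder.Language.Term.subst]
    congr 1
    funext i
    exact ih i fun v hv => h v (by
      simp only [FirstOrder.Language.Term.varFinset, Finset.mem_biUnion]
      exact ⟨i, Finset.mem_univ i, hv⟩)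

/-- Proposition 1 (binding a witness function): for a pattern `m ∈ P` renamed
apart from the other patterns, the witness value
`W(α, mσ) = ⨅ {f m' | m' ∈ P, ∃ σ', m'σ' = mσ}` is bounded above by `F′(α, m) = f m`
and below by the infimum over all patterns of `P` unifiable with `m`. -/
theorem witness_function_bounds
    {L : Type*} [CompleteLattice L]
    {Lang : FirstOrder.Language} {V : Type*} [DecidableEq V]
    (f : Lang.Term V → L)
    (P : Set (Lang.Term V))
    (m : Lang.Term V) (hm : m ∈ P)
    (hren : ∀ m' ∈ P, m' = m ∨ Disjoint m'.varFinset m.varFinset)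
    (σ : V → Lang.Term V) :
    sInf (f '' {m' | m' ∈ P ∧ ∃ σ' : V → Lang.Term V,
        m'.subst σ' = m.subst σ}) ≤ f m ∧
    sInf (f '' {m' | m' ∈ P ∧ ∃ σ'' : V → Lang.Term V,
        m'.subst σ'' = m.subst σ''}) ≤
      sInf (f '' {m' | m' ∈ P ∧ ∃ σ' : V → Lang.Term V,
        m'.subst σ' = m.subst σ}) := by
  constructor
  · exact sInf_le ⟨m, ⟨hm, σ, rfl⟩, rfl⟩
  · apply sInf_le_sInf
    apply Set.image_mono
    rintro m' ⟨hm', σ', hσ'⟩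
    refine ⟨hm', ?_⟩
    rcases hren m' hm' with rfl | hdisj
    · exact ⟨σ, rfl⟩
    · refine ⟨fun v => if v ∈ m.varFinset then σ v else σ' v, ?_⟩
      have h1 : m'.subst (fun v => if v ∈ m.varFinset then σ v else σ' v) = m'.subst σ' :=
        subst_congr_on_varFinset _ _ _ fun v hv => by
          simp [Finset.disjoint_left.mp hdisj hv]
      have h2 : m.subst (fun v => if v ∈ m.varFinset then σ v else σ' v) = m.subst σ :=
        subst_congr_on_varFinset _ _ _ fun v hv => by simp [hv]
      rw [h1, h2, hσ']
end

section
/- (Lemma 1, Decision for Secrecy.) Work in the invariant framework: L a complete lattice, F : A → Set M → L with F(α, {emb α}) = ⊥ and the union law F(α, S₁ ∪ S₂) = F(α, S₁) ⊓ F(α, S₂), F full-invariant-by-opponent for Ded, and K₀ ⊆ M with F(α, K₀) ⊒ ⌜α⌝ for every secret input α. Model the protocol by a family of rules indexed by i, each with received-message sets Recv(i, σ) ⊆ M and a sent message send(i, σ) ∈ M for every instantiation σ, and model a run as the reflexive-transitive closure of the step relation in which K steps to K ∪ {send(i, σ)} for some rule i and instantiation σ. Suppose for every rule i there are static bounds lowerᵢ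 : A → L (the lower bound of the witness function on the send pattern) and recvᵢ : A → L (the derivative evaluation F′ of the received pattern) such that for every instantiation σ and every atom α: (i) lowerᵢ(α) ⊑ F(α, {send(i, σ)}); (ii) F(α, Recv(i, σ)) ⊑ recvᵢ(α); and (iii) the decision criterion lowerᵢ(α) ⊒ ⌜α⌝ ⊓ recvᵢ(α) holds. Further suppose each step only occurs from knowledge K with Recv(i, σ) ⊆ K. Then every ground send instance satisfies the F-increasing condition F(α, {send(i, σ)}) ⊒ ⌜α⌝ ⊓ F(α, Recv(i, σ)) ⊒ ⌜α⌝ ⊓ F(α, K), and consequently the protocol keeps its secret inputs: for every K reachable from K₀ and every atom α with ⌜α⌝ ⊐ ⊥, Ded(K, emb α) implies ⌜K(I)⌝ ⊒ ⌜α⌝. -/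
/-- Lemma 1 (Decision for Secrecy): if the static bounds of the witness function
satisfy the decision criterion `lowerᵢ(α) ⊒ ⌜α⌝ ⊓ recvᵢ(α)` for every rule `i`,
then every ground send instance satisfies the `F`-increasing condition
`F(α, {send(i,σ)}) ⊒ ⌜α⌝ ⊓ F(α, Recv(i,σ)) ⊒ ⌜α⌝ ⊓ F(α, K)` (for any knowledge
`K ⊇ Recv(i,σ)`), and consequently the protocol keeps its secret inputs. -/
theorem decision_for_secrecy
    {A M L ι Γ : Type*} [CompleteLattice L]
    (atoms : M → Set A) (emb : A → M)
    (level : A → L) (KI : L)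
    (Ded : Set M → M → Prop)
    (F : A → Set M → L)
    -- well-formedness clauses of the safe function F
    (hbot : ∀ α : A, F α {emb α} = ⊥)
    (hunion : ∀ (α : A) (S₁ S₂ : Set M), F α (S₁ ∪ S₂) = F α S₁ ⊓ F α S₂)
    (hemb : ∀ α : A, α ∈ atoms (emb α))
    -- full-invariance-by-opponent
    (hfio : ∀ (S : Set M) (m : M), Ded S m → ∀ α ∈ atoms m,
      F α S ≤ F α {m} ∨ level α ≤ KI)
    -- initial knowledge protects the secret inputs
    (K₀ : Set M)
    (hinit : ∀ α : A, ¬ level α ≤ KI → level α ≤ F α K₀)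
    -- the protocol: rules `i`, instantiated by `σ`, receiving `Recv i σ` and
    -- sending `send i σ`
    (Recv : ι → Γ → Set M) (send : ι → Γ → M)
    -- static bounds of the witness function on the send and receive patterns
    (lower recv : ι → A → L)
    (hlower : ∀ (i : ι) (σ : Γ) (α : A), lower i α ≤ F α {send i σ})
    (hrecv : ∀ (i : ι) (σ : Γ) (α : A), F α (Recv i σ) ≤ recv i α)
    -- the decision criterion of Lemma 1
    (hcrit : ∀ (i : ι) (α : A), level α ⊓ recv i α ≤ lower i α) :
    -- every ground send instance satisfies the F-increasing condition
    (∀ (i : ι) (σ : Γ) (α : A),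
      level α ⊓ F α (Recv i σ) ≤ F α {send i σ} ∧
      ∀ K : Set M, Recv i σ ⊆ K →
        level α ⊓ F α K ≤ level α ⊓ F α (Recv i σ)) ∧
    -- consequently the protocol keeps its secret inputs
    (∀ K : Set M,
      Relation.ReflTransGen
        (fun K K' : Set M => ∃ (i : ι) (σ : Γ),
          Recv i σ ⊆ K ∧ K' = K ∪ {send i σ})
        K₀ K →
      ∀ α : A, ⊥ < level α → Ded K (emb α) → level α ≤ KI) := by
  have hanti : ∀ (α : A) (S K : Set M), S ⊆ K → F α K ≤ F α S := by
    intro α S K hSK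
    calc F α K = F α (K ∪ S) := by rw [Set.union_eq_self_of_subset_right hSK]
    _ = F α K ⊓ F α S := hunion α K S
    _ ≤ F α S := inf_le_right
  have hmain : ∀ (i : ι) (σ : Γ) (α : A),
      level α ⊓ F α (Recv i σ) ≤ F α {send i σ} := by
    intro i σ α
    calc level α ⊓ F α (Recv i σ) ≤ level α ⊓ recv i α :=
          inf_le_inf_left _ (hrecv i σ α)
    _ ≤ lower i α := hcrit i α
    _ ≤ F α {send i σ} := hlower i σ α
  constructor
  · intro i σ α
    refine ⟨hmain i σ α, fun K hK => inf_le_inf_left _ (hanti α _ _ hK)⟩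
  · intro K hreach
    have hinv : ∀ β : A, ¬ level β ≤ KI → level β ≤ F β K := by
      induction hreach with
      | refl => exact fun β hβ => hinit β hβ
      | tail _ hstep ih =>
        obtain ⟨i, σ, hsub, rfl⟩ := hstep
        intro β hβ
        rw [hunion]
        refine le_inf (ih β hβ) ?_
        have h1 : level β ≤ level β ⊓ F β _ := le_inf le_rfl (ih β hβ)
        have h2 : level β ⊓ F β _ ≤ level β ⊓ F β (Recv i σ) :=
          inf_le_inf_left _ (hanti β _ _ hsub)
        exact h1.trans (h2.trans (hmain i σ β))
    intro α hpos hded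
    by_contra hKI
    rcases hfio K (emb α) hded α (hemb α) with h | h
    · have : level α ≤ ⊥ := (hinv α hKI).trans (h.trans_eq (hbot α))
      exact absurd (le_antisymm (le_bot_iff.mp this ▸ le_rfl) hpos.le) hpos.ne'
    · exact hKI h
end
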